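/- For all integers m ≥ 0 and n ≥ 1 and every real z with 0 ≤ z < 1, one has ∑_{a > m} ((1 − z^{a−m})/a)·C(a,n;z) = (1/n)·C(m,n;z), where the sum is over integers a > m. -/

import Mathlib

/-- The rising factorial (Pochhammer symbol) (a)_n = a(a+1)⋯(a+n−1). -/
noncomputable def risingFactorial (a : ℝ) (n : ℕ) : ℝ := ∏ i ∈ Finset.range n, (a + i)

/-- The Gauss hypergeometric series F(α,β;γ;z) = ∑_{n≥0} (α)_n (β)_n / ((γ)_n n!) · zⁿ. -/
noncomputable def F (α β γ z : ℝ) : ℝ :=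
  ∑' n : ℕ, risingFactorial α n * risingFactorial β n /
    (risingFactorial γ n * (n.factorial : ℝ)) * z ^ n

/-- The connector C(m,n;z) = m! n!/(m+n)! · F(m, n; m+n+1; z). -/
noncomputable def C (m n : ℕ) (z : ℝ) : ℝ :=
  (m.factorial : ℝ) * n.factorial / (m + n).factorial * F m n (m + n + 1) z

/-!
For `a ≥ 1` the series of `C(a,n;z)/a` has the coefficients `n! (n)_k / k! · 1/(a+k)_{n+1}`. With
`a = m + 1 + j` and `T(j,k)` the `z^k`-term of that series, the left-hand side is
`∑_{j,k} (1 - z^(j+1)) T(j,k)`. All `T(j,k)` are non-negative, so both halves can be resummed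
freely. Summing `T` over `j` telescopes, since
`c/(x)_{c+1} = 1/(x)_c - 1/(x+1)_c`; summing `z^(j+1) T` over the antidiagonals `j + k = r` uses
the hockey-stick identity `∑_{k≤r} (n)_k/k! = (n+1)_r/r!`. The difference of the two resulting
power series is, coefficient by coefficient, the series of `C(m,n;z)/n`, whose coefficients are
`n! (n)_k / k! · (m)_k/(m+1)_{n+k}`.
-/

open Finset Filter Topology Nat

@[simp]
lemma risingFactorial_zero (x : ℝ) : risingFactorial x 0 = 1 := by
  simp [risingFactorial]

lemma risingFactorial_add (x : ℝ) (a b : ℕ) :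
    risingFactorial x (a + b) = risingFactorial x a * risingFactorial (x + a) b := by
  simp only [risingFactorial, prod_range_add, Nat.cast_add, add_assoc]

lemma risingFactorial_succ_left (x : ℝ) (k : ℕ) :
    risingFactorial x (k + 1) = x * risingFactorial (x + 1) k := by
  rw [add_comm k, risingFactorial_add]
  simp [risingFactorial]

lemma risingFactorial_succ (x : ℝ) (k : ℕ) :
    risingFactorial x (k + 1) = risingFactorial x k * (x + k) := by
  simp [risingFactorial, prod_range_succ]

lemma risingFactorial_pos {x : ℝ} (hx : 0 < x) (k : ℕ) : 0 < risingFactorial x k :=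
  prod_pos fun i _ => by positivity

lemma risingFactorial_nonneg {x : ℝ} (hx : 0 ≤ x) (k : ℕ) : 0 ≤ risingFactorial x k :=
  prod_nonneg fun i _ => by positivity

lemma one_le_risingFactorial {x : ℝ} (hx : 1 ≤ x) (k : ℕ) : 1 ≤ risingFactorial x k :=
  one_le_prod fun i _ => by linarith [i.cast_nonneg (α := ℝ)]

lemma risingFactorial_natCast (a k : ℕ) : risingFactorial a k = a.ascFactorial k := by
  simp [risingFactorial, Nat.ascFactorial_eq_prod_range]

lemma factorial_mul_risingFactorial (a k : ℕ) :
    (a ! : ℝ) * risingFactorial (a + 1) k = (a + k)! := by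
  rw [← Nat.cast_one, ← Nat.cast_add, risingFactorial_natCast]
  exact_mod_cast Nat.factorial_mul_ascFactorial a k

lemma risingFactorial_natCast_add_one_div_factorial (q k : ℕ) :
    risingFactorial (q + 1) k / k ! = (k + q).choose q := by
  rw [add_comm k, Nat.cast_add_choose, ← factorial_mul_risingFactorial]
  field_simp

lemma sum_range_risingFactorial_div_factorial (x : ℝ) (r : ℕ) :
    ∑ k ∈ range (r + 1), risingFactorial x k / k ! = risingFactorial (x + 1) r / r ! := by
  induction r with
  | zero => simp
  | succ r ih =>
    rw [sum_range_succ, ih, risingFactorial_succ_left, risingFactorial_succ (x + 1),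
      Nat.factorial_succ]
    push_cast
    field_simp
    ring

lemma one_div_risingFactorial_sub_one_div_risingFactorial_add_one {x : ℝ} (hx : 0 < x) (c : ℕ) :
    1 / risingFactorial x c - 1 / risingFactorial (x + 1) c = c / risingFactorial x (c + 1) := by
  have h₀ := risingFactorial_pos hx c
  have h₁ := risingFactorial_pos (x := x + 1) (by positivity) c
  have hsucc : risingFactorial x c * (x + c) = x * risingFactorial (x + 1) c := by
    rw [← risingFactorial_succ, risingFactorial_succ_left]
  rw [risingFactorial_succ_left]
  field_simp
  linear_combination -hsucc

lemma tendsto_risingFactorial_add_atTop {x : ℝ} (hx : 0 < x) {c : ℕ} (hc : c ≠ 0) :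
    Tendsto (fun j : ℕ => risingFactorial (x + j) c) atTop atTop := by
  obtain ⟨c, rfl⟩ := Nat.exists_eq_succ_of_ne_zero hc
  refine tendsto_atTop_mono (fun j => ?_) tendsto_natCast_atTop_atTop
  have := one_le_risingFactorial (x := x + j + 1) (by linarith [j.cast_nonneg (α := ℝ)]) c
  rw [risingFactorial_succ_left]
  nlinarith

lemma tsum_subtype_lt {α : Type*} [AddCommMonoid α] [TopologicalSpace α] (m : ℕ) (f : ℕ → α) :
    ∑' a : {a : ℕ // m < a}, f a = ∑' j, f (m + 1 + j) :=
  let e : ℕ ≃ {a : ℕ // m < a} :=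
    ⟨fun j => ⟨m + 1 + j, by omega⟩, fun a => a - (m + 1), fun j => by simp,
      fun a => Subtype.ext (by have := a.2; simp only; omega)⟩
  (e.tsum_eq fun a => f a).symm

lemma hasSum_sub_succ_of_antitone {u : ℕ → ℝ} (hu : Antitone u)
    (h : Tendsto u atTop (𝓝 0)) : HasSum (fun j => u j - u (j + 1)) (u 0) := by
  rw [hasSum_iff_tendsto_nat_of_nonneg (fun j => sub_nonneg.2 (hu j.le_succ))]
  simp_rw [sum_range_sub']
  simpa using h.const_sub (u 0)

lemma hasSum_one_div_risingFactorial_add {x : ℝ} (hx : 0 < x) {c : ℕ} (hc : c ≠ 0) :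
    HasSum (fun j : ℕ => 1 / risingFactorial (x + j) (c + 1)) (1 / (c * risingFactorial x c)) := by
  set u : ℕ → ℝ := fun j => 1 / risingFactorial (x + j) c / c
  have hstep (j : ℕ) : u j - u (j + 1) = 1 / risingFactorial (x + j) (c + 1) := by
    have hc' : (c : ℝ) ≠ 0 := by exact_mod_cast hc
    have hj : x + ((j + 1 : ℕ) : ℝ) = x + j + 1 := by push_cast; ring
    simp only [u, hj, ← sub_div,
      one_div_risingFactorial_sub_one_div_risingFactorial_add_one (x := x + j) (by positivity)]
    field_simp
  have hanti : Antitone u := antitone_nat_of_succ_le fun j => by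
    rw [← sub_nonneg, hstep]
    exact (one_div_pos.2 (risingFactorial_pos (by positivity) _)).le
  have hlim : Tendsto u atTop (𝓝 0) := by
    simpa [u] using (tendsto_risingFactorial_add_atTop hx hc).inv_tendsto_atTop.div_const (c : ℝ)
  have htelescope := hasSum_sub_succ_of_antitone hanti hlim
  simp only [hstep] at htelescope
  convert htelescope using 1
  simp only [u, Nat.cast_zero, add_zero]
  ring

lemma HasSum.sum_antidiagonal {α : Type*} [AddCommMonoid α] [TopologicalSpace α]
    [ContinuousAdd α] [RegularSpace α] {f : ℕ × ℕ → α} {a : α} (hf : HasSum f a) :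
    HasSum (fun r => ∑ p ∈ antidiagonal r, f p) a :=
  (HasAntidiagonal.sigmaAntidiagonalEquivProd.hasSum_iff.2 hf).sigma fun r =>
    (antidiagonal r).hasSum f

lemma hasSum_prod_of_nonneg_of_fiberwise {β γ : Type*} {f : β × γ → ℝ} (hf : 0 ≤ f)
    {g : γ → ℝ} {a : ℝ} (hfiber : ∀ c, HasSum (fun b => f (b, c)) (g c)) (hg : HasSum g a) :
    HasSum f a := by
  have hswap : Summable (f ∘ Prod.swap : γ × β → ℝ) :=
    (summable_prod_of_nonneg (f := f ∘ Prod.swap) fun _ => hf _).2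
      ⟨fun c => (hfiber c).summable, by simpa [(hfiber _).tsum_eq] using hg.summable⟩
  have hsum := hswap.hasSum
  rw [(hsum.prod_fiberwise hfiber).unique hg] at hsum
  exact (Equiv.prodComm γ β).hasSum_iff.1 hsum

noncomputable def connectorCoeff (m n k : ℕ) : ℝ :=
  n ! * risingFactorial n k / k ! * (risingFactorial m k / risingFactorial (m + 1) (n + k))

lemma C_eq_tsum (m n : ℕ) (z : ℝ) : C m n z = ∑' k, connectorCoeff m n k * z ^ k := by
  rw [C, F, ← tsum_mul_left]
  congr with k
  have hsplit := risingFactorial_add ((m : ℝ) + 1) n k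
  rw [add_right_comm] at hsplit
  have hm := risingFactorial_pos (x := (m : ℝ) + 1) (by positivity) n
  have hmn := risingFactorial_pos (x := (m : ℝ) + n + 1) (by positivity) k
  rw [connectorCoeff, hsplit, ← factorial_mul_risingFactorial]
  field_simp

lemma risingFactorial_mul_risingFactorial_add (a : ℝ) (n k : ℕ) :
    risingFactorial a k * risingFactorial (a + k) (n + 1) = a * risingFactorial (a + 1) (n + k) := by
  rw [← risingFactorial_add, ← risingFactorial_succ_left]
  congr 1
  omega

lemma connectorCoeff_eq_of_pos {a k : ℕ} (hak : 0 < a + k) (n : ℕ) :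
    connectorCoeff a n k =
      n ! * risingFactorial n k / k ! * (a / risingFactorial (a + k) (n + 1)) := by
  have h₁ := risingFactorial_pos (x := (a : ℝ) + 1) (by positivity) (n + k)
  have h₂ := risingFactorial_pos (x := (a : ℝ) + k) (by exact_mod_cast hak) (n + 1)
  rw [connectorCoeff]
  congr 1
  rw [div_eq_div_iff h₁.ne' h₂.ne', risingFactorial_mul_risingFactorial_add, mul_comm]

section Transport

variable (m n : ℕ) (z : ℝ)

-- The term `(j, k)` is the `z ^ k`-term of `C (m + 1 + j) n z / (m + 1 + j)`.
noncomputable def transportTerm (p : ℕ × ℕ) : ℝ :=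
  n ! * risingFactorial n p.2 / p.2 ! / risingFactorial (m + 1 + p.2 + p.1) (n + 1) * z ^ p.2

-- Coefficients of `z ^ k` in `∑_{a>m} C(a,n;z)/a` and of `z ^ (r + 1)` in
-- `∑_{a>m} z^(a-m) C(a,n;z)/a`, obtained by summing `transportTerm` along columns and antidiagonals.
noncomputable def transportSumCoeff (k : ℕ) : ℝ :=
  n ! * risingFactorial n k / k ! / (n * risingFactorial (m + 1 + k) n)

noncomputable def transportPowSumCoeff (r : ℕ) : ℝ :=
  n ! / risingFactorial (m + 1 + r) (n + 1) * (risingFactorial (n + 1) r / r !)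

variable {z}

lemma transportTerm_nonneg (hz : 0 ≤ z) (p : ℕ × ℕ) : 0 ≤ transportTerm m n z p := by
  have := risingFactorial_pos (x := (m : ℝ) + 1 + p.2 + p.1) (by positivity) (n + 1)
  have := risingFactorial_nonneg (x := (n : ℝ)) (by positivity) p.2
  unfold transportTerm
  positivity

lemma tsum_transportTerm_row (j : ℕ) :
    ∑' k, transportTerm m n z (j, k) = C (m + 1 + j) n z / (m + 1 + j : ℕ) := by
  rw [C_eq_tsum, ← tsum_div_const]
  congr with k
  rw [connectorCoeff_eq_of_pos (by omega), transportTerm]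
  push_cast
  rw [add_right_comm _ (j : ℝ)]
  field_simp

lemma hasSum_transportTerm_col (hn : n ≠ 0) (k : ℕ) :
    HasSum (fun j => transportTerm m n z (j, k)) (transportSumCoeff m n k * z ^ k) := by
  have hcol := (hasSum_one_div_risingFactorial_add (x := (m : ℝ) + 1 + k) (by positivity)
    hn).mul_left (n ! * risingFactorial n k / k ! * z ^ k)
  have hsum : transportSumCoeff m n k * z ^ k =
      n ! * risingFactorial n k / k ! * z ^ k * (1 / (n * risingFactorial (m + 1 + k) n)) := by
    rw [transportSumCoeff]
    ring
  rw [hsum]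
  exact hcol.congr_fun fun j => by rw [transportTerm]; ring

lemma sum_antidiagonal_pow_mul_transportTerm (r : ℕ) :
    ∑ p ∈ antidiagonal r, z ^ (p.1 + 1) * transportTerm m n z p =
      transportPowSumCoeff m n r * z ^ (r + 1) := by
  have hterm : ∀ p ∈ antidiagonal r, z ^ (p.1 + 1) * transportTerm m n z p =
      n ! / risingFactorial (m + 1 + r) (n + 1) * z ^ (r + 1) *
        (risingFactorial n p.2 / p.2 !) := by
    intro p hp
    rw [HasAntidiagonal.mem_antidiagonal] at hp
    have hr : (m : ℝ) + 1 + p.2 + p.1 = m + 1 + r := by rw [← hp]; push_cast; ring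
    rw [transportTerm, hr, ← hp]
    ring
  rw [sum_congr rfl hterm, ← mul_sum, ← Nat.sum_antidiagonal_swap,
    Nat.sum_antidiagonal_eq_sum_range_succ_mk]
  simp only [Prod.swap]
  rw [sum_range_risingFactorial_div_factorial, transportPowSumCoeff]
  ring

lemma summable_transportSumCoeff (hn : n ≠ 0) (hz0 : 0 ≤ z) (hz1 : z < 1) :
    Summable fun k => transportSumCoeff m n k * z ^ k := by
  obtain ⟨q, rfl⟩ := Nat.exists_eq_succ_of_ne_zero hn
  have hchoose := summable_choose_mul_geometric_of_norm_lt_one q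
    (r := z) (by rwa [Real.norm_of_nonneg hz0])
  refine Summable.of_nonneg_of_le (fun k => ?_) (fun k => ?_) (hchoose.mul_left ((q + 1)! : ℝ))
  · have := risingFactorial_pos (x := (m : ℝ) + 1 + k) (by positivity) (q + 1)
    have := risingFactorial_nonneg (x := ((q + 1 : ℕ) : ℝ)) (by positivity) k
    unfold transportSumCoeff
    positivity
  · have hden : 1 ≤ ((q : ℝ) + 1) * risingFactorial (m + 1 + k) (q + 1) :=
      one_le_mul_of_one_le_of_one_le (by simp)
        (one_le_risingFactorial (by linarith [m.cast_nonneg (α := ℝ), k.cast_nonneg (α := ℝ)]) _)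
    rw [transportSumCoeff, mul_div_assoc, Nat.cast_succ,
      risingFactorial_natCast_add_one_div_factorial, ← mul_assoc]
    gcongr
    exact div_le_self (by positivity) hden

lemma hasSum_transportTerm (hn : n ≠ 0) (hz0 : 0 ≤ z) (hz1 : z < 1) :
    HasSum (transportTerm m n z) (∑' k, transportSumCoeff m n k * z ^ k) :=
  hasSum_prod_of_nonneg_of_fiberwise (transportTerm_nonneg m n hz0)
    (hasSum_transportTerm_col m n hn) (summable_transportSumCoeff m n hn hz0 hz1).hasSum

lemma summable_pow_mul_transportTerm (hn : n ≠ 0) (hz0 : 0 ≤ z) (hz1 : z < 1) :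
    Summable fun p : ℕ × ℕ => z ^ (p.1 + 1) * transportTerm m n z p :=
  (hasSum_transportTerm m n hn hz0 hz1).summable.of_nonneg_of_le
    (fun p => mul_nonneg (pow_nonneg hz0 _) (transportTerm_nonneg m n hz0 p))
    (fun p => mul_le_of_le_one_left (transportTerm_nonneg m n hz0 p) (pow_le_one₀ hz0 hz1.le))

lemma hasSum_transportPowSumCoeff (hn : n ≠ 0) (hz0 : 0 ≤ z) (hz1 : z < 1) :
    HasSum (fun r => transportPowSumCoeff m n r * z ^ (r + 1))
      (∑' p : ℕ × ℕ, z ^ (p.1 + 1) * transportTerm m n z p) := by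
  simpa only [sum_antidiagonal_pow_mul_transportTerm] using
    (summable_pow_mul_transportTerm m n hn hz0 hz1).hasSum.sum_antidiagonal

lemma connectorCoeff_zero_eq (hn : n ≠ 0) :
    connectorCoeff m n 0 = n * transportSumCoeff m n 0 := by
  have hn' : (n : ℝ) ≠ 0 := by exact_mod_cast hn
  simp only [connectorCoeff, transportSumCoeff, risingFactorial_zero, factorial_zero, cast_one,
    CharP.cast_eq_zero, add_zero, mul_one, div_one, one_div]
  field_simp

lemma connectorCoeff_succ_eq (hn : n ≠ 0) (r : ℕ) :
    connectorCoeff m n (r + 1) =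
      n * (transportSumCoeff m n (r + 1) - transportPowSumCoeff m n r) := by
  have hn' : (n : ℝ) ≠ 0 := by exact_mod_cast hn
  have harg₁ : (m : ℝ) + (r + 1 : ℕ) = m + 1 + r := by push_cast; ring
  have harg₂ : (m : ℝ) + 1 + (r + 1 : ℕ) = m + 1 + r + 1 := by push_cast; ring
  have hpos := risingFactorial_pos (x := (m : ℝ) + 1 + r + 1) (by positivity) n
  rw [connectorCoeff_eq_of_pos (by omega), transportSumCoeff, transportPowSumCoeff, harg₁, harg₂,
    risingFactorial_succ_left (n : ℝ), risingFactorial_succ_left ((m : ℝ) + 1 + r),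
    Nat.factorial_succ]
  push_cast
  field_simp
  ring

lemma C_eq_of_hasSum_transport (hn : n ≠ 0) {P Q : ℝ}
    (hP : HasSum (fun k => transportSumCoeff m n k * z ^ k) P)
    (hQ : HasSum (fun r => transportPowSumCoeff m n r * z ^ (r + 1)) Q) :
    C m n z = n * (P - Q) := by
  have hsucc : HasSum (fun r => connectorCoeff m n (r + 1) * z ^ (r + 1))
      (n * (P - transportSumCoeff m n 0 - Q)) := by
    have h := (((hasSum_nat_add_iff' 1).2 hP).sub hQ).mul_left (n : ℝ)
    simp only [range_one, sum_singleton, pow_zero, mul_one] at h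
    refine h.congr_fun fun r => ?_
    rw [connectorCoeff_succ_eq m n hn]
    ring
  rw [C_eq_tsum, (HasSum.zero_add (f := fun k => connectorCoeff m n k * z ^ k) hsucc).tsum_eq,
    connectorCoeff_zero_eq m n hn]
  ring

end Transport

/-- ∑_{a>m} ((1 − z^{a−m})/a)·C(a,n;z) = (1/n)·C(m,n;z) for n ≥ 1. -/
theorem connector_transport (m n : ℕ) (hn : 1 ≤ n) (z : ℝ) (hz0 : 0 ≤ z) (hz1 : z < 1) :
    ∑' a : {a : ℕ // m < a}, (1 - z ^ ((a : ℕ) - m)) / (a : ℕ) * C a n z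
      = 1 / (n : ℝ) * C m n z := by
  have hn0 : n ≠ 0 := by omega
  have hT := hasSum_transportTerm m n hn0 hz0 hz1
  have hpowT := (summable_pow_mul_transportTerm m n hn0 hz0 hz1).hasSum
  have hrows : HasSum (fun j => (1 - z ^ (j + 1)) / (m + 1 + j : ℕ) * C (m + 1 + j) n z)
      ((∑' k, transportSumCoeff m n k * z ^ k) -
        ∑' p : ℕ × ℕ, z ^ (p.1 + 1) * transportTerm m n z p) := by
    refine (hT.sub hpowT).prod_fiberwise fun j => ?_
    rw [div_mul_eq_mul_div, mul_div_assoc, ← tsum_transportTerm_row]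
    exact ((hT.summable.prod_factor j).hasSum.mul_left _).congr_fun fun k => by ring
  rw [tsum_subtype_lt m fun a => (1 - z ^ (a - m)) / a * C a n z, C_eq_of_hasSum_transport m n hn0
    (summable_transportSumCoeff m n hn0 hz0 hz1).hasSum
    (hasSum_transportPowSumCoeff m n hn0 hz0 hz1), ← hrows.tsum_eq]
  simp_rw [show ∀ j, m + 1 + j - m = j + 1 by omega]
  field_simp
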